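/- arXiv:1008.0723 — 6 statements merged into one kernel-verified Lean document; each statement's English description precedes it below -/
import Mathlib

section
/- Let p be a prime and A, B ⊆ F_p be two sets with |A|·|B| > p. Suppose that B = −B or B ∩ (−B) = ∅. Then every element of F_p can be written as a₁b₁ + a₂b₂ + ⋯ + a₈b₈ with a₁,…,a₈ ∈ A and b₁,…,b₈ ∈ B; that is, 8AB = F_p. -/
open Finset Pointwise

/-! Write `A + ζB` for the image of `A × B` under `(a, b) ↦ a + ζ b`. Two distinct points of
`A × B` have the same image for at most one slope `ζ`, so the energies of the `A + ζB` sum to at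
most `p|A||B| + |A|²|B|² < 2|A|²|B|²` over all `ζ`. By Cauchy–Schwarz some `ζ` then has
`|A + ζB| > p/2`, and so does `-ζ` (swapping the `b`'s preserves the energy); hence
`(A + ζB) + (A + ζB) = F_p`, and likewise for `-ζ`.

Suppose `c = b₁ + b₂ ≠ 0` with `b₁, b₂ ∈ B` and `ζcB ⊆ 2AB`. Then `c(a + ζb) = ab₁ + ab₂ + ζcb`
lies in `4AB`, and every `x = c(u + v)` with `u, v ∈ A + ζB` lies in `8AB`. If `B = -B`,
pigeonhole gives `a₁ + ζb₁ = a₂ + ζb₂` with `b₁ ≠ b₂`, and `c = b₁ + (-b₂)` works since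
`ζcb = a₂b + a₁(-b)`. If `B ∩ -B = ∅`, writing `0 = (a - ζb) + (a' - ζb')` gives `c = b + b' ≠ 0`
with `ζcb = ab + a'b`. -/

theorem card_sq_le_card_image_mul_card_filter {ι κ : Type*} [DecidableEq κ]
    (s : Finset ι) (f : ι → κ) :
    #s ^ 2 ≤ #(s.image f) * #{x ∈ s ×ˢ s | f x.1 = f x.2} := by
  calc #s ^ 2 = (∑ c ∈ s.image f, #{a ∈ s | f a = c}) ^ 2 := by rw [← card_eq_sum_card_image]
  _ ≤ #(s.image f) * ∑ c ∈ s.image f, #{a ∈ s | f a = c} ^ 2 := sq_sum_le_card_mul_sum_sq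
  _ = #(s.image f) * #{x ∈ s ×ˢ s | f x.1 = f x.2} := by
    rw [card_eq_sum_card_fiberwise (s := {x ∈ s ×ˢ s | f x.1 = f x.2}) (f := fun x => f x.1)
      (t := s.image f)]
    · refine congrArg _ (sum_congr rfl fun c _ => ?_)
      rw [sq, ← card_product]
      congr 1
      ext ⟨a, b⟩
      simp only [mem_product, mem_filter]
      grind
    · intro x hx
      simp only [coe_filter, mem_product, Set.mem_ofPred_eq] at hx
      exact mem_coe.2 (mem_image_of_mem f hx.1.1)

theorem exists_add_eq_of_card_lt_card_add_card {G : Type*} [AddGroup G] [Fintype G]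
    [DecidableEq G] {s t : Finset G} (h : Fintype.card G < #s + #t) (x : G) :
    ∃ a ∈ s, ∃ b ∈ t, a + b = x := by
  obtain ⟨a, ha⟩ := inter_nonempty_of_card_lt_card_add_card (subset_univ s)
    (subset_univ (t.image (x - ·))) (by rwa [card_univ, card_image_of_injective _ sub_right_injective])
  obtain ⟨has, hat⟩ := mem_inter.1 ha
  obtain ⟨b, hb, rfl⟩ := mem_image.1 hat
  exact ⟨_, has, b, hb, sub_add_cancel x b⟩

section SumsOfProducts

variable {R : Type*} {A B : Finset R}

section

variable [Mul R] [AddCommMonoid R]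

/-- The set `kAB`. -/
def sumsOfProducts (A B : Finset R) (k : ℕ) : Set R :=
  {x | ∃ a b : Fin k → R, (∀ i, a i ∈ A) ∧ (∀ i, b i ∈ B) ∧ ∑ i, a i * b i = x}

theorem mul_mem_sumsOfProducts_one {a b : R} (ha : a ∈ A) (hb : b ∈ B) :
    a * b ∈ sumsOfProducts A B 1 :=
  ⟨fun _ => a, fun _ => b, fun _ => ha, fun _ => hb, by simp⟩

theorem add_mem_sumsOfProducts_add {x y : R} {k m : ℕ} (hx : x ∈ sumsOfProducts A B k)
    (hy : y ∈ sumsOfProducts A B m) : x + y ∈ sumsOfProducts A B (k + m) := by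
  obtain ⟨a, b, ha, hb, rfl⟩ := hx
  obtain ⟨a', b', ha', hb', rfl⟩ := hy
  refine ⟨Fin.append a a', Fin.append b b', fun i => ?_, fun i => ?_, by simp [Fin.sum_univ_add]⟩
  · induction i using Fin.addCases <;> simp [ha, ha']
  · induction i using Fin.addCases <;> simp [hb, hb']

end

theorem add_mul_add_mul_mem_sumsOfProducts_four [CommSemiring R] {ζ b₁ b₂ a b : R} (hb₁ : b₁ ∈ B) (hb₂ : b₂ ∈ B)
    (hζ : ζ * (b₁ + b₂) * b ∈ sumsOfProducts A B 2) (ha : a ∈ A) :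
    (b₁ + b₂) * (a + ζ * b) ∈ sumsOfProducts A B 4 := by
  rw [show (b₁ + b₂) * (a + ζ * b) = a * b₁ + a * b₂ + ζ * (b₁ + b₂) * b by ring]
  exact add_mem_sumsOfProducts_add (add_mem_sumsOfProducts_add
    (mul_mem_sumsOfProducts_one ha hb₁) (mul_mem_sumsOfProducts_one ha hb₂)) hζ

end SumsOfProducts

section Field

variable {F : Type*} [Field F] [DecidableEq F]

/-- For `T = A ×ˢ B` this is the additive energy of `A + ζB`, counted with multiplicity. -/
def lineEnergy (T : Finset (F × F)) (ζ : F) : ℕ :=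
  #{x ∈ T ×ˢ T | x.1.1 + ζ * x.1.2 = x.2.1 + ζ * x.2.2}

theorem lineEnergy_product_neg (A B : Finset F) (ζ : F) :
    lineEnergy (A ×ˢ B) (-ζ) = lineEnergy (A ×ˢ B) ζ := by
  let swap : (F × F) × (F × F) → (F × F) × (F × F) := fun x => ((x.1.1, x.2.2), (x.2.1, x.1.2))
  refine card_nbij' swap swap ?_ ?_ (fun _ _ => rfl) (fun _ _ => rfl) <;>
  · rintro ⟨⟨a, b⟩, a', b'⟩
    simp only [swap, coe_filter, mem_product, Set.mem_ofPred_eq]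
    rintro ⟨⟨⟨ha, hb⟩, ha', hb'⟩, h⟩
    exact ⟨⟨⟨ha, hb'⟩, ha', hb⟩, by linear_combination h⟩

theorem lt_two_mul_card_image_of_mul_lineEnergy_lt {T : Finset (F × F)} {ζ : F} {n : ℕ}
    (h : n * lineEnergy T ζ < 2 * #T ^ 2) : n < 2 * #(T.image fun x => x.1 + ζ * x.2) :=
  Nat.lt_of_mul_lt_mul_right <| h.trans_le <| by
    rw [mul_assoc]
    exact Nat.mul_le_mul_left 2 (card_sq_le_card_image_mul_card_filter T _)

def IsGoodSlope (A B : Finset F) (ζ : F) : Prop :=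
  ∃ b₁ ∈ B, ∃ b₂ ∈ B, b₁ + b₂ ≠ 0 ∧ ∀ b ∈ B, ζ * (b₁ + b₂) * b ∈ sumsOfProducts A B 2

variable [Fintype F]

theorem card_filter_add_mul_eq_le_one {u v : F × F} (huv : u ≠ v) :
    #{ζ : F | u.1 + ζ * u.2 = v.1 + ζ * v.2} ≤ 1 := by
  refine card_le_one.2 fun ζ hζ ξ hξ => ?_
  simp only [mem_filter, mem_univ, true_and] at hζ hξ
  have h2 : u.2 ≠ v.2 := fun h2 => huv (Prod.ext (by simpa [h2] using hζ) h2)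
  exact mul_right_cancel₀ (sub_ne_zero.2 h2) (by linear_combination hζ - hξ)

theorem sum_lineEnergy_le (T : Finset (F × F)) :
    ∑ ζ : F, lineEnergy T ζ ≤ Fintype.card F * #T + #T ^ 2 := by
  calc ∑ ζ : F, lineEnergy T ζ
      = ∑ x ∈ T ×ˢ T, #{ζ : F | x.1.1 + ζ * x.1.2 = x.2.1 + ζ * x.2.2} := by
        simp only [lineEnergy, card_filter]
        exact sum_comm
  _ ≤ ∑ x ∈ T ×ˢ T, ((if x.1 = x.2 then Fintype.card F else 0) + 1) := by
        refine sum_le_sum fun x _ => ?_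
        split_ifs with h
        · exact (card_le_univ _).trans (Nat.le_add_right _ _)
        · exact (card_filter_add_mul_eq_le_one h).trans_eq (zero_add 1).symm
  _ = Fintype.card F * #T + #T ^ 2 := by
        rw [sum_add_distrib, sum_ite, sum_const_zero, add_zero, sum_const, smul_eq_mul,
          ← diag_eq_filter, diag_card, sum_const, card_product, smul_eq_mul, mul_one, sq, mul_comm]

theorem exists_card_mul_lineEnergy_lt {T : Finset (F × F)} (hT : Fintype.card F < #T) :
    ∃ ζ : F, Fintype.card F * lineEnergy T ζ < 2 * #T ^ 2 := by
  suffices h : ∑ ζ : F, Fintype.card F * lineEnergy T ζ < ∑ _ζ : F, 2 * #T ^ 2 by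
    obtain ⟨ζ, -, hζ⟩ := exists_lt_of_sum_lt h
    exact ⟨ζ, hζ⟩
  rw [← mul_sum, sum_const, card_univ, smul_eq_mul]
  calc _ ≤ Fintype.card F * (Fintype.card F * #T + #T ^ 2) :=
        Nat.mul_le_mul_left _ (sum_lineEnergy_le T)
  _ < Fintype.card F * (2 * #T ^ 2) :=
        Nat.mul_lt_mul_of_pos_left (by nlinarith) Fintype.card_pos

theorem exists_two_mul_card_image_gt {A B : Finset F} (hAB : Fintype.card F < #A * #B) :
    ∃ ζ : F, Fintype.card F < 2 * #((A ×ˢ B).image fun x => x.1 + ζ * x.2) ∧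
      Fintype.card F < 2 * #((A ×ˢ B).image fun x => x.1 + -ζ * x.2) := by
  obtain ⟨ζ, hζ⟩ := exists_card_mul_lineEnergy_lt (T := A ×ˢ B) (by rwa [card_product])
  exact ⟨ζ, lt_two_mul_card_image_of_mul_lineEnergy_lt hζ,
    lt_two_mul_card_image_of_mul_lineEnergy_lt (by rwa [lineEnergy_product_neg])⟩

theorem exists_add_mul_add_add_mul_eq {A B : Finset F} {ζ : F}
    (h : Fintype.card F < 2 * #((A ×ˢ B).image fun x => x.1 + ζ * x.2)) (y : F) :
    ∃ a ∈ A, ∃ b ∈ B, ∃ a' ∈ A, ∃ b' ∈ B, a + ζ * b + (a' + ζ * b') = y := by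
  obtain ⟨u, hu, v, hv, rfl⟩ := exists_add_eq_of_card_lt_card_add_card (by rwa [← two_mul]) y
  obtain ⟨⟨a, b⟩, hab, rfl⟩ := mem_image.1 hu
  obtain ⟨⟨a', b'⟩, hab', rfl⟩ := mem_image.1 hv
  rw [mem_product] at hab hab'
  exact ⟨a, hab.1, b, hab.2, a', hab'.1, b', hab'.2, rfl⟩

theorem isGoodSlope_of_eq_neg {A B : Finset F} (hB : B = -B)
    (hAB : Fintype.card F < #A * #B) (ζ : F) : IsGoodSlope A B ζ := by
  have hneg : ∀ b ∈ B, -b ∈ B := fun b hb => hB ▸ neg_mem_neg hb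
  obtain ⟨⟨a₁, b₁⟩, h₁, ⟨a₂, b₂⟩, h₂, hne, heq⟩ :=
    exists_ne_map_eq_of_card_lt_of_maps_to (t := univ) (f := fun x : F × F => x.1 + ζ * x.2)
      (by rwa [card_univ, card_product]) (fun _ _ => mem_coe.2 (mem_univ _))
  rw [mem_product] at h₁ h₂
  have hb : b₁ ≠ b₂ := by
    rintro rfl
    exact hne (Prod.ext (add_right_cancel heq) rfl)
  refine ⟨b₁, h₁.2, -b₂, hneg _ h₂.2, by rwa [← sub_eq_add_neg, sub_ne_zero], fun b hb => ?_⟩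
  rw [show ζ * (b₁ + -b₂) * b = a₂ * b + a₁ * -b by linear_combination b * heq]
  exact add_mem_sumsOfProducts_add (mul_mem_sumsOfProducts_one h₂.1 hb)
    (mul_mem_sumsOfProducts_one h₁.1 (hneg b hb))

theorem isGoodSlope_of_disjoint_neg {A B : Finset F} {ζ : F} (hB : Disjoint B (-B))
    (h : Fintype.card F < 2 * #((A ×ˢ B).image fun x => x.1 + -ζ * x.2)) :
    IsGoodSlope A B ζ := by
  obtain ⟨a, ha, b, hb, a', ha', b', hb', hsum⟩ := exists_add_mul_add_add_mul_eq h 0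
  refine ⟨b, hb, b', hb', fun hc => disjoint_left.1 hB hb' ?_, fun β hβ => ?_⟩
  · rw [eq_neg_of_add_eq_zero_right hc]
    exact neg_mem_neg hb
  · rw [show ζ * (b + b') * β = a * β + a' * β by linear_combination (-β) * hsum]
    exact add_mem_sumsOfProducts_add (mul_mem_sumsOfProducts_one ha hβ)
      (mul_mem_sumsOfProducts_one ha' hβ)

theorem IsGoodSlope.sumsOfProducts_eight_eq_univ {A B : Finset F} {ζ : F}
    (hζ : IsGoodSlope A B ζ)
    (h : Fintype.card F < 2 * #((A ×ˢ B).image fun x => x.1 + ζ * x.2)) :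
    sumsOfProducts A B 8 = Set.univ := by
  obtain ⟨b₁, hb₁, b₂, hb₂, hc, hmul⟩ := hζ
  refine Set.eq_univ_of_forall fun x => ?_
  obtain ⟨a, ha, b, hb, a', ha', b', hb', hsum⟩ := exists_add_mul_add_add_mul_eq h ((b₁ + b₂)⁻¹ * x)
  rw [← mul_inv_cancel_left₀ hc x, ← hsum, mul_add]
  exact add_mem_sumsOfProducts_add
    (add_mul_add_mul_mem_sumsOfProducts_four hb₁ hb₂ (hmul b hb) ha)
    (add_mul_add_mul_mem_sumsOfProducts_four hb₁ hb₂ (hmul b' hb') ha')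

theorem sumsOfProducts_eight_eq_univ {A B : Finset F} (hAB : Fintype.card F < #A * #B)
    (hB : B = -B ∨ Disjoint B (-B)) : sumsOfProducts A B 8 = Set.univ := by
  obtain ⟨ζ, hζ, hnegζ⟩ := exists_two_mul_card_image_gt hAB
  have hgood : IsGoodSlope A B ζ :=
    hB.elim (isGoodSlope_of_eq_neg · hAB ζ) (isGoodSlope_of_disjoint_neg · hnegζ)
  exact hgood.sumsOfProducts_eight_eq_univ hζ

end Field

theorem eightfold_product_sums_cover (p : ℕ) (hp : p.Prime) (A B : Finset (ZMod p))
    (hcard : p < A.card * B.card)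
    (hB : B = -B ∨ B ∩ (-B) = ∅) :
    ∀ x : ZMod p, ∃ a b : Fin 8 → ZMod p,
      (∀ i, a i ∈ A) ∧ (∀ i, b i ∈ B) ∧ ∑ i, a i * b i = x := by
  have : Fact p.Prime := ⟨hp⟩
  have hAB : Fintype.card (ZMod p) < #A * #B := by rwa [ZMod.card]
  exact Set.eq_univ_iff_forall.1
    (sumsOfProducts_eight_eq_univ hAB (hB.imp_right disjoint_iff_inter_eq_empty.2))
end

section
/- Let p be a prime and R ⊆ F_p* a multiplicative subgroup with |R| > √p. Then every element of F_p is a sum of eight elements of R; that is, 8R = F_p. -/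
open Finset Pointwise

/-- `R` is (the image in `F_p` of) a multiplicative subgroup of `F_p^*`. -/
def IsMulSubgroup (p : ℕ) (R : Finset (ZMod p)) : Prop :=
  ∃ H : Subgroup (ZMod p)ˣ, (R : Set (ZMod p)) = Units.val '' (H : Set (ZMod p)ˣ)

set_option linter.unusedSectionVars false

section EightAux

variable {K : Type*} [Field K] [Fintype K] [DecidableEq K]

/-- The sumset `R + μ • R`, as an image of `R × R`. -/
private def XS (R : Finset K) (μ : K) : Finset K :=
  (R ×ˢ R).image fun q => q.1 + μ * q.2

/-- The "additive energy" between `R` and `μ • R`. -/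
private def EN (R : Finset K) (μ : K) : ℕ :=
  (((R ×ˢ R) ×ˢ (R ×ˢ R)).filter
    fun q => q.1.1 + μ * q.1.2 = q.2.1 + μ * q.2.2).card

private lemma aux_swap (R : Finset K) (μ : K) : EN R (-μ) = EN R μ := by
  classical
  unfold EN
  refine Finset.card_bij' (fun q _ => ((q.1.1, q.2.2), (q.2.1, q.1.2)))
    (fun q _ => ((q.1.1, q.2.2), (q.2.1, q.1.2))) ?_ ?_ ?_ ?_
  · rintro ⟨⟨a, b⟩, ⟨c, d⟩⟩ hq
    simp only [mem_filter, mem_product] at hq ⊢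
    obtain ⟨⟨⟨ha, hb⟩, hc, hd⟩, heq⟩ := hq
    exact ⟨⟨⟨ha, hd⟩, hc, hb⟩, by linear_combination heq⟩
  · rintro ⟨⟨a, b⟩, ⟨c, d⟩⟩ hq
    simp only [mem_filter, mem_product] at hq ⊢
    obtain ⟨⟨⟨ha, hb⟩, hc, hd⟩, heq⟩ := hq
    exact ⟨⟨⟨ha, hd⟩, hc, hb⟩, by linear_combination heq⟩
  · rintro ⟨⟨a, b⟩, ⟨c, d⟩⟩ _; rfl
  · rintro ⟨⟨a, b⟩, ⟨c, d⟩⟩ _; rfl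

private lemma aux_cs (R : Finset K) (μ : K) :
    ((R.card : ℤ) * R.card) ^ 2 ≤ ((XS R μ).card : ℤ) * (EN R μ : ℤ) := by
  classical
  set g : K × K → K := fun q => q.1 + μ * q.2 with hg
  set f : K → ℕ := fun v => ((R ×ˢ R).filter fun q => g q = v).card with hf
  have h1 : ∑ v ∈ XS R μ, f v = R.card * R.card := by
    rw [← card_product R R]
    exact (Finset.card_eq_sum_card_image g (R ×ˢ R)).symm
  have h2 : ∑ v ∈ XS R μ, f v * f v = EN R μ := by
    have e1 : EN R μ = ∑ q ∈ (R ×ˢ R) ×ˢ (R ×ˢ R),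
        if g q.1 = g q.2 then 1 else 0 := by
      rw [EN, Finset.card_filter]
    rw [e1, Finset.sum_product]
    have e2 : ∀ q1 ∈ R ×ˢ R,
        (∑ q2 ∈ R ×ˢ R, if g q1 = g q2 then 1 else 0) = f (g q1) := by
      intro q1 _
      show _ = ((R ×ˢ R).filter fun q => g q = g q1).card
      rw [Finset.card_filter]
      exact Finset.sum_congr rfl fun q2 _ => by simp [eq_comm]
    rw [Finset.sum_congr rfl e2]
    rw [← Finset.sum_fiberwise_of_maps_to (fun q hq => Finset.mem_image_of_mem g hq)
      (fun q1 => f (g q1))]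
    refine Finset.sum_congr rfl fun v _ => ?_
    have : ∀ q1 ∈ (R ×ˢ R).filter fun q => g q = v, f (g q1) = f v := by
      intro q1 hq1
      rw [(Finset.mem_filter.1 hq1).2]
    rw [Finset.sum_congr rfl this, Finset.sum_const, smul_eq_mul]
  have h3 : (∑ v ∈ XS R μ, (f v : ℤ)) ^ 2
      ≤ ((XS R μ).card : ℤ) * ∑ v ∈ XS R μ, (f v : ℤ) ^ 2 :=
    sq_sum_le_card_mul_sum_sq
  calc ((R.card : ℤ) * R.card) ^ 2 = (∑ v ∈ XS R μ, (f v : ℤ)) ^ 2 := by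
        rw [← Nat.cast_sum, h1]; push_cast; ring
    _ ≤ ((XS R μ).card : ℤ) * ∑ v ∈ XS R μ, (f v : ℤ) ^ 2 := h3
    _ = ((XS R μ).card : ℤ) * (EN R μ : ℤ) := by
        rw [← h2]
        push_cast
        congr 1
        exact Finset.sum_congr rfl fun x _ => pow_two ((f x : ℤ))

private lemma aux_sum_bound (R : Finset K) :
    (∑ μ ∈ (univ.erase (0 : K)), EN R μ) + R.card * R.card ≤
      (univ.erase (0 : K)).card * (R.card * R.card)
        + (R.card * R.card) * (R.card * R.card) := by
  classical
  set U : Finset K := univ.erase (0 : K) with hU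
  set P : Finset ((K × K) × (K × K)) := (R ×ˢ R) ×ˢ (R ×ˢ R) with hP
  have h1 : (∑ μ ∈ U, EN R μ)
      = ∑ q ∈ P, (U.filter fun μ => q.1.1 + μ * q.1.2 = q.2.1 + μ * q.2.2).card := by
    have : ∀ μ ∈ U, EN R μ
        = ∑ q ∈ P, if q.1.1 + μ * q.1.2 = q.2.1 + μ * q.2.2 then 1 else 0 := by
      intro μ _; rw [EN, Finset.card_filter]
    rw [Finset.sum_congr rfl this, Finset.sum_comm]
    exact Finset.sum_congr rfl fun q _ => (Finset.card_filter _ _).symm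
  have h2 : ∀ q ∈ P,
      (U.filter fun μ => q.1.1 + μ * q.1.2 = q.2.1 + μ * q.2.2).card
        ≤ if q.1 = q.2 then U.card else 1 := by
    rintro ⟨⟨a, b⟩, ⟨c, d⟩⟩ _
    by_cases hq : ((a, b) : K × K) = ((c, d) : K × K)
    · rw [if_pos hq]; exact Finset.card_filter_le _ _
    · rw [if_neg hq]
      refine Finset.card_le_one.2 fun μ1 h1' μ2 h2' => ?_
      simp only [Finset.mem_filter] at h1' h2'
      by_cases hbd : b = d
      · exfalso
        apply hq
        have hac : a = c := by
          have := h1'.2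
          rw [hbd] at this
          exact add_right_cancel this
        rw [hac, hbd]
      · have h3 : (μ1 - μ2) * (b - d) = 0 := by linear_combination h1'.2 - h2'.2
        rcases mul_eq_zero.1 h3 with h | h
        · exact sub_eq_zero.1 h
        · exact absurd (sub_eq_zero.1 h) hbd
  have h3 : (∑ q ∈ P, if q.1 = q.2 then U.card else 1)
      = (P.filter fun q => q.1 = q.2).card * U.card
        + (P.filter fun q => ¬ q.1 = q.2).card := by
    rw [Finset.sum_ite, Finset.sum_const, Finset.sum_const, smul_eq_mul, smul_eq_mul, mul_one]
  have hdiag : (P.filter fun q => q.1 = q.2).card = R.card * R.card := by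
    rw [← Finset.card_product R R]
    apply Finset.card_bij (fun q _ => q.1)
    · rintro ⟨q1, q2⟩ hq
      exact (Finset.mem_product.1 (Finset.mem_filter.1 hq).1).1
    · rintro ⟨q1, q2⟩ hq ⟨q1', q2'⟩ hq' h
      simp only [Finset.mem_filter] at hq hq'
      simp only at h
      rw [Prod.ext_iff]
      exact ⟨h, by rw [← hq.2, ← hq'.2, h]⟩
    · intro b hb
      refine ⟨(b, b), ?_, rfl⟩
      rw [Finset.mem_filter]
      exact ⟨Finset.mem_product.2 ⟨hb, hb⟩, rfl⟩
  have hsplit : (P.filter fun q => q.1 = q.2).card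
      + (P.filter fun q => ¬ q.1 = q.2).card = P.card :=
    Finset.card_filter_add_card_filter_not _
  have hPcard : P.card = (R.card * R.card) * (R.card * R.card) := by
    rw [hP, Finset.card_product, Finset.card_product]
  have hoff : (P.filter fun q => ¬ q.1 = q.2).card + R.card * R.card
      = (R.card * R.card) * (R.card * R.card) := by
    omega
  calc (∑ μ ∈ U, EN R μ) + R.card * R.card
      ≤ (∑ q ∈ P, if q.1 = q.2 then U.card else 1) + R.card * R.card := by
        rw [h1]; exact Nat.add_le_add_right (Finset.sum_le_sum h2) _
    _ = (R.card * R.card) * U.card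
        + ((P.filter fun q => ¬ q.1 = q.2).card + R.card * R.card) := by
        rw [h3, hdiag]; ring
    _ = U.card * (R.card * R.card) + (R.card * R.card) * (R.card * R.card) := by
        rw [hoff]; ring

private lemma aux_pigeon (R : Finset K) (hc : Fintype.card K < R.card * R.card)
    (ξ : K) : ∃ a ∈ R, ∃ a' ∈ R, ∃ c ∈ R, ∃ c' ∈ R, c ≠ c' ∧ a - a' = ξ * (c - c') := by
  classical
  obtain ⟨q1, hq1, q2, hq2, hne, heq⟩ :=
    Finset.exists_ne_map_eq_of_card_lt_of_maps_to
      (t := (univ : Finset K)) (s := R ×ˢ R)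
      (by rw [Finset.card_univ, Finset.card_product]; exact hc)
      (f := fun q => q.1 - ξ * q.2) (fun q _ => Finset.mem_univ _)
  obtain ⟨a, c⟩ := q1
  obtain ⟨a', c'⟩ := q2
  rw [Finset.mem_product] at hq1 hq2
  have heq' : a - ξ * c = a' - ξ * c' := heq
  refine ⟨a, hq1.1, a', hq2.1, c, hq1.2, c', hq2.2, ?_, by linear_combination heq'⟩
  rintro rfl
  exact hne (by rw [Prod.mk.injEq]; exact ⟨by linear_combination heq', rfl⟩)

private lemma aux_cover (X Y : Finset K) (h : Fintype.card K < X.card + Y.card) (x : K) :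
    ∃ u ∈ X, ∃ v ∈ Y, u + v = x := by
  classical
  have hinj : Function.Injective (fun y : K => x - y) := fun y1 y2 hh => by
    simpa using sub_right_injective hh
  set Z := Y.image (fun y => x - y) with hZdef
  have hZ : Z.card = Y.card := Finset.card_image_of_injective _ hinj
  have hne : (X ∩ Z).Nonempty := by
    by_contra hcon
    rw [Finset.not_nonempty_iff_eq_empty] at hcon
    have hdis : Disjoint X Z := Finset.disjoint_iff_inter_eq_empty.2 hcon
    have h1 := Finset.card_union_of_disjoint hdis
    have h2 := Finset.card_le_univ (X ∪ Z)
    omega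
  obtain ⟨u, hu⟩ := hne
  have huX : u ∈ X := (Finset.mem_inter.1 hu).1
  obtain ⟨y, hy, hxy⟩ := Finset.mem_image.1 (Finset.mem_inter.1 hu).2
  exact ⟨u, huX, y, hy, by rw [← hxy]; ring⟩

end EightAux

theorem eightfold_sums_cover (p : ℕ) (hp : p.Prime) (R : Finset (ZMod p))
    (hR : IsMulSubgroup p R) (hcard : Real.sqrt p < (R.card : ℝ)) :
    ∀ x : ZMod p, ∃ r : Fin 8 → ZMod p, (∀ i, r i ∈ R) ∧ ∑ i, r i = x := by
  haveI : Fact p.Prime := ⟨hp⟩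
  haveI : NeZero p := ⟨hp.ne_zero⟩
  intro x
  obtain ⟨H, hH⟩ := hR
  -- basic closure facts about R
  have hmemR : ∀ a : ZMod p, a ∈ R ↔ ∃ u : (ZMod p)ˣ, u ∈ H ∧ (u : ZMod p) = a := by
    intro a
    constructor
    · intro ha
      have h1 : a ∈ (R : Set (ZMod p)) := ha
      rw [hH] at h1
      obtain ⟨u, hu, he⟩ := h1
      exact ⟨u, hu, he⟩
    · rintro ⟨u, hu, rfl⟩
      have h1 : (u : ZMod p) ∈ (R : Set (ZMod p)) := by rw [hH]; exact ⟨u, hu, rfl⟩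
      exact h1
  have hmul : ∀ a ∈ R, ∀ b ∈ R, a * b ∈ R := by
    intro a ha b hb
    obtain ⟨u, hu, rfl⟩ := (hmemR a).1 ha
    obtain ⟨v, hv, rfl⟩ := (hmemR b).1 hb
    exact (hmemR _).2 ⟨u * v, H.mul_mem hu hv, rfl⟩
  have hne0 : ∀ a ∈ R, a ≠ 0 := by
    intro a ha
    obtain ⟨u, _, rfl⟩ := (hmemR a).1 ha
    exact u.ne_zero
  have hinvR : ∀ a ∈ R, a⁻¹ ∈ R := by
    intro a ha
    obtain ⟨u, hu, rfl⟩ := (hmemR a).1 ha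
    refine (hmemR _).2 ⟨u⁻¹, H.inv_mem hu, ?_⟩
    rw [← Units.val_inv_eq_inv_val]
  -- cardinality facts
  have hNp : p < R.card * R.card := by
    have h0N : (0 : ℝ) < (R.card : ℝ) := lt_of_le_of_lt (Real.sqrt_nonneg _) hcard
    have h1 : (p : ℝ) < (R.card : ℝ) ^ 2 := (Real.sqrt_lt' h0N).1 hcard
    rw [sq] at h1
    exact_mod_cast h1
  have hN2 : 2 ≤ R.card := by
    by_contra hcon
    push_neg at hcon
    have h1 : R.card ≤ 1 := by omega
    have := Nat.mul_le_mul h1 h1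
    have := hp.two_le
    omega
  have hNltp : R.card < p := by
    have hsub : R ⊆ (univ.erase (0 : ZMod p)) :=
      fun a ha => Finset.mem_erase.2 ⟨hne0 a ha, Finset.mem_univ _⟩
    have h1 := Finset.card_le_card hsub
    rw [Finset.card_erase_of_mem (Finset.mem_univ _), Finset.card_univ, ZMod.card] at h1
    have := hp.pos
    omega
  have hp3 : 3 ≤ p := by
    rcases Nat.lt_or_ge p 3 with h | h
    · exfalso
      have hp2 : p = 2 := by have := hp.two_le; omega
      have h1 : R.card ≤ 1 := by omega
      have := Nat.mul_le_mul h1 h1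
      omega
    · exact h
  -- choose the best multiplier μ0
  set U : Finset (ZMod p) := univ.erase (0 : ZMod p) with hUdef
  have hUcard : U.card + 1 = p := by
    rw [hUdef, Finset.card_erase_of_mem (Finset.mem_univ _), Finset.card_univ, ZMod.card]
    have := hp.pos
    omega
  have hUne : U.Nonempty := ⟨1, Finset.mem_erase.2 ⟨one_ne_zero, Finset.mem_univ _⟩⟩
  obtain ⟨μ0, hμ0U, hμ0min⟩ := Finset.exists_min_image U (EN R) hUne
  have hμ0 : μ0 ≠ 0 := (Finset.mem_erase.1 hμ0U).1
  have hsum_lb : U.card * EN R μ0 ≤ ∑ μ ∈ U, EN R μ := by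
    have := Finset.card_nsmul_le_sum U (EN R) (EN R μ0) (fun i hi => hμ0min i hi)
    simpa [smul_eq_mul] using this
  have hchain : U.card * EN R μ0 + R.card * R.card ≤
      U.card * (R.card * R.card) + (R.card * R.card) * (R.card * R.card) :=
    le_trans (Nat.add_le_add_right hsum_lb _) (aux_sum_bound R)
  -- key numeric step
  have key : ∀ M : ℕ, ((R.card : ℤ) * R.card) ^ 2 ≤ (M : ℤ) * (EN R μ0 : ℤ) →
      p < 2 * M := by
    intro M hM
    by_contra hcon
    push_neg at hcon
    have hU1 : ((U.card : ℤ)) + 1 = (p : ℤ) := by exact_mod_cast hUcard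
    have h2 : ((U.card : ℤ)) * (EN R μ0 : ℤ) + (R.card : ℤ) * R.card ≤
        ((U.card : ℤ)) * ((R.card : ℤ) * R.card)
          + ((R.card : ℤ) * R.card) * ((R.card : ℤ) * R.card) := by
      exact_mod_cast hchain
    have h3 : 2 * (M : ℤ) ≤ (p : ℤ) := by exact_mod_cast hcon
    have h4 : (p : ℤ) < (R.card : ℤ) * R.card := by exact_mod_cast hNp
    have h5 : (3 : ℤ) ≤ (p : ℤ) := by exact_mod_cast hp3
    have he0 : (0 : ℤ) ≤ (EN R μ0 : ℤ) := Int.natCast_nonneg _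
    have hM0 : (0 : ℤ) ≤ (M : ℤ) := Int.natCast_nonneg _
    have hn0 : (2 : ℤ) ≤ (R.card : ℤ) := by exact_mod_cast hN2
    have hA1 : 2 * ((p : ℤ) - 1) * (((R.card : ℤ) * R.card) ^ 2)
        ≤ 2 * ((p : ℤ) - 1) * ((M : ℤ) * (EN R μ0 : ℤ)) := by
      have hnn : (0 : ℤ) ≤ 2 * ((p : ℤ) - 1) := by linarith
      exact mul_le_mul_of_nonneg_left hM hnn
    have hA2 : 2 * ((p : ℤ) - 1) * ((M : ℤ) * (EN R μ0 : ℤ))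
        ≤ (p : ℤ) * (((p : ℤ) - 1) * (EN R μ0 : ℤ)) := by
      have h6 : (0 : ℤ) ≤ ((p : ℤ) - 1) * (EN R μ0 : ℤ) := mul_nonneg (by linarith) he0
      calc 2 * ((p : ℤ) - 1) * ((M : ℤ) * (EN R μ0 : ℤ))
          = (2 * M) * (((p : ℤ) - 1) * (EN R μ0 : ℤ)) := by ring
        _ ≤ (p : ℤ) * (((p : ℤ) - 1) * (EN R μ0 : ℤ)) := mul_le_mul_of_nonneg_right h3 h6
    have hA3 : (p : ℤ) * (((p : ℤ) - 1) * (EN R μ0 : ℤ))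
        ≤ (p : ℤ) * (((p : ℤ) - 1) * ((R.card : ℤ) * R.card)
            + ((R.card : ℤ) * R.card) * ((R.card : ℤ) * R.card) - (R.card : ℤ) * R.card) := by
      have h6 : (0 : ℤ) ≤ (p : ℤ) := by linarith
      apply mul_le_mul_of_nonneg_left _ h6
      have h7 : ((U.card : ℤ)) = (p : ℤ) - 1 := by linarith
      rw [h7] at h2
      linarith
    have hA4 : (p : ℤ) * (((p : ℤ) - 1) * ((R.card : ℤ) * R.card)
            + ((R.card : ℤ) * R.card) * ((R.card : ℤ) * R.card) - (R.card : ℤ) * R.card)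
        < 2 * ((p : ℤ) - 1) * (((R.card : ℤ) * R.card) ^ 2) := by
      have hx : (0:ℤ) < ((R.card : ℤ) * R.card)
          * ((((R.card : ℤ) * R.card) - (p : ℤ)) * ((p : ℤ) - 2)) := by
        apply mul_pos
        · nlinarith
        · exact mul_pos (by linarith) (by linarith)
      nlinarith [hx]
    linarith
  have hA : p < 2 * (XS R μ0).card := key _ (aux_cs R μ0)
  have hB : p < 2 * (XS R (-μ0)).card := by
    apply key
    have h1 := aux_cs R (-μ0)
    rwa [aux_swap R μ0] at h1
  -- witnesses: s, t with t = ν * s, both sums of two elements of R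
  have hwit : ∀ ν : ZMod p, ν ≠ 0 → p < 2 * (XS R (-ν)).card →
      ∃ s t e1 e2 f1 f2 : ZMod p, e1 ∈ R ∧ e2 ∈ R ∧ f1 ∈ R ∧ f2 ∈ R ∧
        s ≠ 0 ∧ s = e1 + e2 ∧ t = f1 + f2 ∧ t = ν * s := by
    intro ν hν hcard2
    by_cases hneg : (-1 : ZMod p) ∈ R
    · obtain ⟨a, ha, a', ha', c, hc, c', hc', hcc, heq⟩ :=
        aux_pigeon R (by rwa [ZMod.card]) ν
      refine ⟨c - c', a - a', c, (-1) * c', a, (-1) * a', hc,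
        hmul _ hneg _ hc', ha, hmul _ hneg _ ha', sub_ne_zero.2 hcc, by ring, by ring, ?_⟩
      linear_combination heq
    · obtain ⟨u, hu, v, hv, huv⟩ :=
        aux_cover (XS R (-ν)) (XS R (-ν)) (by rw [ZMod.card]; omega) 0
      obtain ⟨⟨a, b⟩, hab, hu'⟩ := Finset.mem_image.1 hu
      obtain ⟨⟨c, d⟩, hcd, hv'⟩ := Finset.mem_image.1 hv
      rw [Finset.mem_product] at hab hcd
      have hu'' : a + (-ν) * b = u := hu'
      have hv'' : c + (-ν) * d = v := hv'
      refine ⟨b + d, a + c, b, d, a, c, hab.2, hcd.2, hab.1, hcd.1, ?_, rfl, rfl, ?_⟩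
      · intro h0
        apply hneg
        have hd : d = -b := by linear_combination h0
        have hbne : b ≠ 0 := hne0 b hab.2
        have hm1 : (-1 : ZMod p) = d * b⁻¹ := by
          rw [hd, neg_mul, mul_inv_cancel₀ hbne]
        rw [hm1]
        exact hmul _ hcd.2 _ (hinvR b hab.2)
      · linear_combination hu'' + hv'' + huv
  obtain ⟨s, t, e1, e2, f1, f2, he1, he2, hf1, hf2, hs0, hsd, htd, hts⟩ :=
    hwit μ0 hμ0 hB
  obtain ⟨s', t', e1', e2', f1', f2', he1', he2', hf1', hf2', hs0', hsd', htd', hts'⟩ :=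
    hwit (-μ0) (neg_ne_zero.2 hμ0) (by rwa [neg_neg])
  -- the two covering sets
  have hXcard : ((XS R μ0).image (fun w => s * w)).card = (XS R μ0).card :=
    Finset.card_image_of_injective _ (mul_right_injective₀ hs0)
  have hYcard : ((XS R (-μ0)).image (fun w => s' * w)).card = (XS R (-μ0)).card :=
    Finset.card_image_of_injective _ (mul_right_injective₀ hs0')
  obtain ⟨u, hu, v, hv, huv⟩ := aux_cover ((XS R μ0).image (fun w => s * w))
    ((XS R (-μ0)).image (fun w => s' * w)) (by rw [ZMod.card]; omega) x
  obtain ⟨w, hw, hsw⟩ := Finset.mem_image.1 hu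
  obtain ⟨⟨a, b⟩, hab, hw'⟩ := Finset.mem_image.1 hw
  rw [Finset.mem_product] at hab
  obtain ⟨w2, hw2, hsw2⟩ := Finset.mem_image.1 hv
  obtain ⟨⟨c, d⟩, hcd, hw2'⟩ := Finset.mem_image.1 hw2
  rw [Finset.mem_product] at hcd
  have hw'' : a + μ0 * b = w := hw'
  have hw2'' : c + (-μ0) * d = w2 := hw2'
  have hsw' : s * w = u := hsw
  have hsw2' : s' * w2 = v := hsw2
  have h8 : s * a + t * b + (s' * c + t' * d) = x := by
    have h9 : s * (a + μ0 * b) = u := by rw [hw'']; exact hsw'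
    have h10 : s' * (c + (-μ0) * d) = v := by rw [hw2'']; exact hsw2'
    calc s * a + t * b + (s' * c + t' * d)
        = s * (a + μ0 * b) + s' * (c + (-μ0) * d) := by rw [hts, hts']; ring
      _ = u + v := by rw [h9, h10]
      _ = x := huv
  refine ⟨![e1 * a, e2 * a, f1 * b, f2 * b, e1' * c, e2' * c, f1' * d, f2' * d], ?_, ?_⟩
  · intro i
    fin_cases i
    · exact hmul _ he1 _ hab.1
    · exact hmul _ he2 _ hab.1
    · exact hmul _ hf1 _ hab.2
    · exact hmul _ hf2 _ hab.2
    · exact hmul _ he1' _ hcd.1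
    · exact hmul _ he2' _ hcd.1
    · exact hmul _ hf1' _ hcd.2
    · exact hmul _ hf2' _ hcd.2
  · have hev : ∑ i, (![e1 * a, e2 * a, f1 * b, f2 * b,
        e1' * c, e2' * c, f1' * d, f2' * d] : Fin 8 → ZMod p) i
        = e1 * a + (e2 * a + (f1 * b + (f2 * b + (e1' * c + (e2' * c
          + (f1' * d + f2' * d)))))) := by
      simp [Fin.sum_univ_succ]
    rw [hev]
    linear_combination h8 - a * hsd - b * htd - c * hsd' - d * htd'
end

section
/- Let p be a prime, R ⊆ F_p* a multiplicative subgroup, and Q ⊆ F_p a nonempty R-invariant set. Then for every ξ ∈ F_p with ξ ≠ 0, the Fourier coefficient satisfies |Q̂(ξ)| < |Q|^{1/2}·p^{1/2}·|R|^{−1/2}. -/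
open Finset Pointwise

/-- The Fourier coefficient `Q̂(ξ) = ∑_{x ∈ Q} e^{-2πi ξ x / p}`. -/
noncomputable def fCoeff (p : ℕ) (Q : Finset (ZMod p)) (ξ : ZMod p) : ℂ :=
  ∑ x ∈ Q, Complex.exp (-((2 : ℂ) * (Real.pi : ℂ) * Complex.I * ((ξ * x).val : ℂ) / (p : ℂ)))

/-!
The frequencies `r * ξ` with `r ∈ R` are `#R` distinct nonzero frequencies, and the
invariance `Q * R = Q` gives them all the same coefficient `Q̂(ξ)`. By Parseval,
`∑_η |Q̂(η)|² = p |Q|`, and the zero frequency alone contributes `|Q̂(0)|² = |Q|² > 0`,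
so `#R |Q̂(ξ)|² ≤ p |Q| - |Q|² < p |Q|`.
-/

/-- `Q̂(ξ)` taken with respect to an arbitrary additive character `ψ`. -/
noncomputable def charSum {F : Type*} [Semiring F] (ψ : AddChar F ℂ) (Q : Finset F) (ξ : F) :
    ℂ :=
  ∑ x ∈ Q, ψ (ξ * x)

@[simp]
lemma charSum_zero {F : Type*} [Semiring F] (ψ : AddChar F ℂ) (Q : Finset F) :
    charSum ψ Q 0 = #Q := by
  simp [charSum]

lemma sum_norm_sq_charSum {F : Type*} [CommRing F] [Fintype F] [DecidableEq F]
    {ψ : AddChar F ℂ} (hψ : ψ.IsPrimitive) (Q : Finset F) :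
    ∑ ξ, ‖charSum ψ Q ξ‖ ^ 2 = Fintype.card F * #Q := by
  have expand (ξ : F) :
      (‖charSum ψ Q ξ‖ : ℂ) ^ 2 = ∑ x ∈ Q, ∑ y ∈ Q, ψ (ξ * (x - y)) := by
    rw [← Complex.mul_conj', charSum, map_sum, sum_mul_sum]
    refine sum_congr rfl fun x _ => sum_congr rfl fun y _ => ?_
    rw [← AddChar.map_neg_eq_conj, ← AddChar.map_add_eq_mul, mul_sub, sub_eq_add_neg]
  have orthogonality (x y : F) :
      ∑ ξ, ψ (ξ * (x - y)) = if x = y then (Fintype.card F : ℂ) else 0 := by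
    rw [AddChar.sum_mulShift _ hψ]
    simp [sub_eq_zero]
  apply Complex.ofReal_injective
  push_cast
  simp_rw [expand]
  rw [sum_comm]
  simp_rw [sum_comm (s := univ), orthogonality]
  simp [mul_comm]

section Field

variable {F : Type*} [Field F] (ψ : AddChar F ℂ) {Q : Finset F}

lemma charSum_mul_of_mul_mem {r : F} (hr : r ≠ 0) (hQ : ∀ x ∈ Q, x * r ∈ Q) (ξ : F) :
    charSum ψ Q (r * ξ) = charSum ψ Q ξ := by
  classical
  have hinj : Set.InjOn (· * r) Q := fun x _ y _ h => mul_right_cancel₀ hr h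
  have himage : Q.image (· * r) = Q :=
    eq_of_subset_of_card_le (image_subset_iff.2 hQ) (card_image_of_injOn hinj).ge
  conv_rhs => rw [charSum, ← himage, sum_image hinj]
  exact sum_congr rfl fun x _ => by ring_nf

lemma card_mul_norm_sq_charSum_add_sq_le [Fintype F] [DecidableEq F] (hψ : ψ.IsPrimitive)
    {R : Finset F} (hR : 0 ∉ R) (hQ : ∀ r ∈ R, ∀ x ∈ Q, x * r ∈ Q) {ξ : F}
    (hξ : ξ ≠ 0) :
    (#R : ℝ) * ‖charSum ψ Q ξ‖ ^ 2 + (#Q : ℝ) ^ 2 ≤ Fintype.card F * #Q := by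
  have hR' : ∀ r ∈ R, r ≠ 0 := fun r hr h => hR (h ▸ hr)
  have horbit :
      ∑ η ∈ R.image (· * ξ), ‖charSum ψ Q η‖ ^ 2 = #R * ‖charSum ψ Q ξ‖ ^ 2 := by
    rw [sum_image fun a _ b _ h => mul_right_cancel₀ hξ h,
      sum_congr rfl fun r hr => by rw [charSum_mul_of_mul_mem ψ (hR' r hr) (hQ r hr) ξ],
      sum_const, nsmul_eq_mul]
  have hsub : R.image (· * ξ) ⊆ univ.erase 0 := by
    simp only [subset_iff, mem_image, mem_erase]
    rintro _ ⟨r, hr, rfl⟩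
    exact ⟨mul_ne_zero (hR' r hr) hξ, mem_univ _⟩
  calc (#R : ℝ) * ‖charSum ψ Q ξ‖ ^ 2 + (#Q : ℝ) ^ 2
      ≤ ∑ η ∈ univ.erase 0, ‖charSum ψ Q η‖ ^ 2 + ‖charSum ψ Q 0‖ ^ 2 := by
        rw [← horbit, charSum_zero, Complex.norm_natCast]
        gcongr
    _ = (Fintype.card F : ℝ) * #Q := by
        rw [sum_erase_add _ _ (mem_univ 0), sum_norm_sq_charSum hψ]

end Field

lemma lt_rpow_half_mul_rpow_half_mul_rpow_neg_half {a b c x : ℝ} (ha : 0 ≤ a) (hb : 0 ≤ b)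
    (hc : 0 < c) (hx : 0 ≤ x) (h : c * x ^ 2 < a * b) :
    x < a ^ ((1 : ℝ) / 2) * b ^ ((1 : ℝ) / 2) * c ^ (-(1 : ℝ) / 2) := by
  rw [← Real.mul_rpow ha hb, neg_div, Real.rpow_neg hc.le, ← div_eq_mul_inv,
    ← Real.div_rpow (mul_nonneg ha hb) hc.le, ← Real.sqrt_eq_rpow, Real.lt_sqrt hx,
    lt_div_iff₀ hc, mul_comm]
  exact h

lemma fCoeff_eq_charSum (p : ℕ) [NeZero p] (Q : Finset (ZMod p)) (ξ : ZMod p) :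
    fCoeff p Q ξ = charSum ZMod.stdAddChar Q (-ξ) := by
  refine sum_congr rfl fun x _ => ?_
  rw [neg_mul, AddChar.map_neg_eq_inv, ZMod.stdAddChar_apply, ZMod.toCircle_apply,
    ← Complex.exp_neg]

lemma IsMulSubgroup.zero_notMem {p : ℕ} [Fact (1 < p)] {R : Finset (ZMod p)}
    (hR : IsMulSubgroup p R) : 0 ∉ R := by
  obtain ⟨H, hH⟩ := hR
  intro h0
  obtain ⟨u, -, hu⟩ := (Set.ext_iff.1 hH 0).1 h0
  exact u.ne_zero hu

theorem fourier_bound_invariant_set (p : ℕ) (hp : p.Prime)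
    (R Q : Finset (ZMod p)) (hR : IsMulSubgroup p R)
    (hQne : Q.Nonempty) (hQinv : Q * R = Q) :
    ∀ ξ : ZMod p, ξ ≠ 0 →
      ‖fCoeff p Q ξ‖ <
        (Q.card : ℝ) ^ ((1 : ℝ) / 2) * (p : ℝ) ^ ((1 : ℝ) / 2) *
          (R.card : ℝ) ^ (-(1 : ℝ) / 2) := by
  intro ξ hξ
  have : Fact p.Prime := ⟨hp⟩
  have hRne : R.Nonempty := by
    by_contra hR
    rw [not_nonempty_iff_eq_empty.1 hR, mul_empty] at hQinv
    exact hQne.ne_empty hQinv.symm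
  have hinv : ∀ r ∈ R, ∀ x ∈ Q, x * r ∈ Q := fun r hr x hx => hQinv ▸ mul_mem_mul hx hr
  have hbound := card_mul_norm_sq_charSum_add_sq_le ZMod.stdAddChar
    (ZMod.isPrimitive_stdAddChar p) hR.zero_notMem hinv (neg_ne_zero.2 hξ)
  rw [ZMod.card, ← fCoeff_eq_charSum] at hbound
  have hQpos : (0 : ℝ) < #Q := by exact_mod_cast hQne.card_pos
  refine lt_rpow_half_mul_rpow_half_mul_rpow_neg_half (by positivity) (by positivity)
    (by exact_mod_cast hRne.card_pos) (norm_nonneg _) ?_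
  nlinarith
end

section
/- Let p be a prime, l ≥ 2 an integer, and R ⊆ F_p* a multiplicative subgroup with |R| > p^{(l+1)/(2l)}. Then every element of F_p* is a sum of l elements of R; that is, F_p* ⊆ lR. -/
open Finset Pointwise

/-!
Let `S t = ∑_{r ∈ R} e(t r / p)` and let `N y` count the `l`-tuples from `R` summing to `y`, so
that `S ^ l` is the Fourier transform of `N`. Parseval gives `∑ |S|² = p |R|`, and since `S` is
constant on the cosets `t R`, every `t ≠ 0` has `|S t|² ≤ p - |R|`; hence
`∑ |S|^(2l) ≤ |R|^(2l) + |R| (p - |R|)^l`. If `x ∉ l R`, then `N` vanishes on the coset `x R`, and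
Cauchy–Schwarz on the remaining `p - |R|` points gives `p |R|^(2l) ≤ (p - |R|) ∑ |S|^(2l)`.
Together these force `|R|^(2l) ≤ (p - |R|)^(l+1) < p^(l+1)`, against the size of `R`.
-/

theorem AddChar.map_sum_eq_prod {ι A M : Type*} [AddCommMonoid A] [CommMonoid M]
    (ψ : AddChar A M) (s : Finset ι) (f : ι → A) : ψ (∑ i ∈ s, f i) = ∏ i ∈ s, ψ (f i) :=
  map_prod ψ.toMonoidHom (fun i ↦ Multiplicative.ofAdd (f i)) s

section Fourier

variable {N : ℕ} [NeZero N]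

open ComplexConjugate in
theorem sum_norm_sq_sum_mul_stdAddChar (c : ZMod N → ℂ) :
    ∑ t, ‖∑ y, c y * ZMod.stdAddChar (t * y)‖ ^ 2 = N * ∑ y, ‖c y‖ ^ 2 := by
  apply Complex.ofReal_injective
  push_cast
  simp_rw [← Complex.mul_conj', map_sum, map_mul, ← AddChar.map_neg_eq_conj, sum_mul_sum]
  calc ∑ t, ∑ y, ∑ z, c y * ZMod.stdAddChar (t * y) * (conj (c z) * ZMod.stdAddChar (-(t * z)))
      = ∑ y, ∑ z, c y * conj (c z) * ∑ t, ZMod.stdAddChar (t * (y - z)) := by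
        rw [sum_comm]
        refine sum_congr rfl fun y _ ↦ ?_
        rw [sum_comm]
        refine sum_congr rfl fun z _ ↦ ?_
        rw [mul_sum]
        refine sum_congr rfl fun t _ ↦ ?_
        rw [mul_sub, sub_eq_add_neg, AddChar.map_add_eq_mul]
        ring
    _ = ∑ y, c y * conj (c y) * N := by
        simp [AddChar.sum_mulShift _ (ZMod.isPrimitive_stdAddChar N), sub_eq_zero]
    _ = _ := by simp_rw [mul_sum, mul_comm (N : ℂ)]

noncomputable def expSum (R : Finset (ZMod N)) (t : ZMod N) : ℂ :=
  ∑ r ∈ R, ZMod.stdAddChar (t * r)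

def repCount (R : Finset (ZMod N)) (l : ℕ) (y : ZMod N) : ℕ :=
  #{r ∈ Fintype.piFinset fun _ : Fin l ↦ R | ∑ i, r i = y}

variable (R : Finset (ZMod N)) (l : ℕ)

theorem expSum_zero : expSum R 0 = #R := by
  simp [expSum]

theorem sum_repCount : ∑ y, repCount R l y = #R ^ l := by
  simp only [repCount]
  rw [← card_eq_sum_card_fiberwise fun _ _ ↦ mem_univ _]
  simp

theorem expSum_pow (t : ZMod N) :
    expSum R t ^ l = ∑ y, (repCount R l y : ℂ) * ZMod.stdAddChar (t * y) := by
  calc expSum R t ^ l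
      = ∑ r ∈ Fintype.piFinset fun _ : Fin l ↦ R, ZMod.stdAddChar (t * ∑ i, r i) := by
        simp_rw [expSum, ← Fin.prod_const, prod_univ_sum, mul_sum, AddChar.map_sum_eq_prod]
    _ = _ := by
        rw [← sum_fiberwise_of_maps_to (g := fun r ↦ ∑ i, r i) (t := univ) fun _ _ ↦ mem_univ _]
        refine sum_congr rfl fun y _ ↦ ?_
        rw [repCount, sum_congr rfl fun r hr ↦ by rw [(mem_filter.1 hr).2], sum_const, nsmul_eq_mul]

theorem sum_norm_expSum_sq : ∑ t, ‖expSum R t‖ ^ 2 = N * #R := by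
  simpa [expSum, ite_mul, sum_ite_mem, apply_ite] using
    sum_norm_sq_sum_mul_stdAddChar (fun y ↦ if y ∈ R then (1 : ℂ) else 0)

theorem sum_erase_zero_norm_expSum_sq :
    ∑ t ∈ univ.erase 0, ‖expSum R t‖ ^ 2 = #R * (N - #R) := by
  rw [sum_erase_eq_sub (mem_univ _), sum_norm_expSum_sq, expSum_zero, Complex.norm_natCast]
  ring

theorem sum_norm_expSum_pow :
    ∑ t, ‖expSum R t‖ ^ (2 * l) = N * ∑ y, (repCount R l y : ℝ) ^ 2 := by
  simpa [pow_mul', ← norm_pow, expSum_pow] using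
    sum_norm_sq_sum_mul_stdAddChar (fun y ↦ (repCount R l y : ℂ))

end Fourier

section Invariance

variable {p : ℕ} [Fact p.Prime] {R : Finset (ZMod p)} {u : ZMod p}

theorem smul_finset_eq_of_mem (h0 : 0 ∉ R) (hmul : ∀ a ∈ R, ∀ b ∈ R, a * b ∈ R) (hu : u ∈ R) :
    u • R = R :=
  eq_of_subset_of_card_le
    (fun _ h ↦ by obtain ⟨r, hr, rfl⟩ := mem_smul_finset.1 h; exact hmul _ hu _ hr)
    (card_smul_finset₀ (ne_of_mem_of_not_mem hu h0) R).ge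

theorem expSum_mul_left (hu : u ≠ 0) (hR : u • R = R) (t : ZMod p) :
    expSum R (u * t) = expSum R t := by
  conv_rhs =>
    rw [expSum, ← hR, smul_finset_def, sum_image fun _ _ _ _ h ↦ smul_right_injective _ hu h]
  simp_rw [expSum, smul_eq_mul, mul_assoc, mul_left_comm t]

theorem repCount_mul_left (hu : u ≠ 0) (hR : u • R = R) (l : ℕ) (y : ZMod p) :
    repCount R l (u * y) = repCount R l y := by
  have hmem (b : ZMod p) : u * b ∈ R ↔ b ∈ R := by
    have := smul_mem_smul_finset_iff₀ hu (s := R) (b := b)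
    rwa [hR] at this
  have hmem' (b : ZMod p) : u⁻¹ * b ∈ R ↔ b ∈ R := by
    rw [← smul_eq_mul, inv_smul_mem_iff₀ hu, hR]
  refine card_nbij' (u⁻¹ • ·) (u • ·) ?_ ?_ (fun _ _ ↦ smul_inv_smul₀ hu _)
    (fun _ _ ↦ inv_smul_smul₀ hu _) <;>
  · intro r
    simp only [coe_filter, Fintype.mem_piFinset, Set.mem_ofPred_eq, Pi.smul_apply, smul_eq_mul,
      ← mul_sum, hmem, hmem']
    rintro ⟨hr, hs⟩
    exact ⟨hr, by simp [hs, hu]⟩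

end Invariance

section Estimates

variable {p : ℕ} [Fact p.Prime] {R : Finset (ZMod p)}

theorem norm_expSum_sq_le (h0 : 0 ∉ R) (hmul : ∀ a ∈ R, ∀ b ∈ R, a * b ∈ R) (hR : R.Nonempty)
    {t : ZMod p} (ht : t ≠ 0) : ‖expSum R t‖ ^ 2 ≤ p - #R := by
  have hsub : t • R ⊆ univ.erase 0 := fun s hs ↦ by
    obtain ⟨r, hr, rfl⟩ := mem_smul_finset.1 hs
    exact mem_erase.2 ⟨smul_ne_zero ht (ne_of_mem_of_not_mem hr h0), mem_univ _⟩
  have key : (#R : ℝ) * ‖expSum R t‖ ^ 2 ≤ #R * (p - #R) := calc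
    (#R : ℝ) * ‖expSum R t‖ ^ 2 = ∑ s ∈ t • R, ‖expSum R s‖ ^ 2 := by
      rw [smul_finset_def, sum_image fun _ _ _ _ h ↦ smul_right_injective _ ht h, ← nsmul_eq_mul,
        ← sum_const]
      refine sum_congr rfl fun u hu ↦ ?_
      dsimp only
      rw [smul_eq_mul, mul_comm,
        expSum_mul_left (ne_of_mem_of_not_mem hu h0) (smul_finset_eq_of_mem h0 hmul hu)]
    _ ≤ ∑ s ∈ univ.erase 0, ‖expSum R s‖ ^ 2 :=
      sum_le_sum_of_subset_of_nonneg hsub fun _ _ _ ↦ by positivity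
    _ = #R * (p - #R) := sum_erase_zero_norm_expSum_sq R
  exact le_of_mul_le_mul_left key (mod_cast hR.card_pos)

theorem sum_norm_expSum_pow_le (h0 : 0 ∉ R) (hmul : ∀ a ∈ R, ∀ b ∈ R, a * b ∈ R)
    (hR : R.Nonempty) {l : ℕ} (hl : l ≠ 0) :
    ∑ t, ‖expSum R t‖ ^ (2 * l) ≤ #R ^ (2 * l) + #R * (p - #R) ^ l := by
  obtain ⟨k, rfl⟩ := Nat.exists_eq_succ_of_ne_zero hl
  rw [← add_sum_erase _ _ (mem_univ 0), expSum_zero, Complex.norm_natCast]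
  gcongr
  calc ∑ t ∈ univ.erase 0, ‖expSum R t‖ ^ (2 * (k + 1))
      = ∑ t ∈ univ.erase 0, (‖expSum R t‖ ^ 2) ^ k * ‖expSum R t‖ ^ 2 := by
        refine sum_congr rfl fun t _ ↦ by ring
    _ ≤ ∑ t ∈ univ.erase 0, ((p : ℝ) - #R) ^ k * ‖expSum R t‖ ^ 2 := by
        gcongr with t ht
        exact norm_expSum_sq_le h0 hmul hR (ne_of_mem_erase ht)
    _ = #R * (p - #R) ^ (k + 1) := by
        rw [← mul_sum, sum_erase_zero_norm_expSum_sq]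
        ring

theorem sq_card_pow_le_mul_sum_sq (h0 : 0 ∉ R) (hmul : ∀ a ∈ R, ∀ b ∈ R, a * b ∈ R) {l : ℕ}
    {x : ZMod p} (hx : x ≠ 0) (hN : repCount R l x = 0) :
    (#R ^ l) ^ 2 ≤ (p - #R) * ∑ y, repCount R l y ^ 2 := by
  have hvanish : ∀ y ∈ x • R, repCount R l y = 0 := fun y hy ↦ by
    obtain ⟨u, hu, rfl⟩ := mem_smul_finset.1 hy
    rw [smul_eq_mul, mul_comm,
      repCount_mul_left (ne_of_mem_of_not_mem hu h0) (smul_finset_eq_of_mem h0 hmul hu), hN]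
  have hcard : #(x • R)ᶜ = p - #R := by
    rw [card_compl, ZMod.card, card_smul_finset₀ hx]
  calc (#R ^ l) ^ 2 = (∑ y ∈ (x • R)ᶜ, repCount R l y) ^ 2 := by
        rw [← sum_repCount, ← sum_subset (subset_univ _) fun y _ hy ↦ hvanish y (notMem_compl.1 hy)]
    _ ≤ #(x • R)ᶜ * ∑ y ∈ (x • R)ᶜ, repCount R l y ^ 2 := sq_sum_le_card_mul_sum_sq
    _ ≤ (p - #R) * ∑ y, repCount R l y ^ 2 := by
        rw [hcard]
        gcongr
        exact subset_univ _

theorem card_pow_le_of_repCount_eq_zero (h0 : 0 ∉ R) (hmul : ∀ a ∈ R, ∀ b ∈ R, a * b ∈ R)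
    (hR : R.Nonempty) {l : ℕ} (hl : l ≠ 0) {x : ZMod p} (hx : x ≠ 0) (hN : repCount R l x = 0) :
    (#R : ℝ) ^ (2 * l) ≤ (p - #R) ^ (l + 1) := by
  have hRp : #R ≤ p := (card_le_univ R).trans_eq (ZMod.card p)
  have hCS : ((#R : ℝ) ^ l) ^ 2 ≤ (p - #R) * ∑ y, (repCount R l y : ℝ) ^ 2 := by
    exact_mod_cast sq_card_pow_le_mul_sum_sq h0 hmul hx hN
  have hpR : (0 : ℝ) ≤ p - #R := sub_nonneg.2 (mod_cast hRp)
  have key : (p : ℝ) * #R ^ (2 * l) ≤ (p - #R) * (#R ^ (2 * l) + #R * (p - #R) ^ l) := calc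
    (p : ℝ) * #R ^ (2 * l) = p * ((#R : ℝ) ^ l) ^ 2 := by ring
    _ ≤ p * ((p - #R) * ∑ y, (repCount R l y : ℝ) ^ 2) := by gcongr
    _ = (p - #R) * ∑ t, ‖expSum R t‖ ^ (2 * l) := by rw [sum_norm_expSum_pow]; ring
    _ ≤ (p - #R) * (#R ^ (2 * l) + #R * (p - #R) ^ l) := by
      gcongr
      exact sum_norm_expSum_pow_le h0 hmul hR hl
  refine le_of_mul_le_mul_left ?_ (mod_cast hR.card_pos : (0 : ℝ) < #R)
  linear_combination key

end Estimates

namespace IsMulSubgroup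

variable {p : ℕ} {R : Finset (ZMod p)}

theorem zero_notMem_s10 [Nontrivial (ZMod p)] (hR : IsMulSubgroup p R) : (0 : ZMod p) ∉ R := by
  obtain ⟨H, hH⟩ := hR
  rw [← mem_coe, hH]
  rintro ⟨v, -, hv⟩
  exact v.ne_zero hv

theorem one_mem (hR : IsMulSubgroup p R) : (1 : ZMod p) ∈ R := by
  obtain ⟨H, hH⟩ := hR
  rw [← mem_coe, hH]
  exact ⟨1, H.one_mem, rfl⟩

theorem mul_mem (hR : IsMulSubgroup p R) : ∀ a ∈ R, ∀ b ∈ R, a * b ∈ R := by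
  obtain ⟨H, hH⟩ := hR
  simp_rw [← mem_coe, hH]
  rintro _ ⟨u, hu, rfl⟩ _ ⟨v, hv, rfl⟩
  exact ⟨u * v, H.mul_mem hu hv, rfl⟩

end IsMulSubgroup

theorem pow_lt_pow_of_rpow_div_lt {a b : ℝ} (ha : 0 ≤ a) {m n : ℕ} (hn : n ≠ 0)
    (h : a ^ ((m : ℝ) / n) < b) : a ^ m < b ^ n := by
  rw [← Real.rpow_natCast a, ← div_mul_cancel₀ (m : ℝ) (Nat.cast_ne_zero.2 hn),
    Real.rpow_mul ha, Real.rpow_natCast]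
  exact pow_lt_pow_left₀ h (by positivity) hn

theorem subgroup_basis_property_large (p : ℕ) (hp : p.Prime) (l : ℕ) (hl : 2 ≤ l)
    (R : Finset (ZMod p)) (hR : IsMulSubgroup p R)
    (hcard : (p : ℝ) ^ (((l : ℝ) + 1) / (2 * (l : ℝ))) < (R.card : ℝ)) :
    ∀ x : ZMod p, x ≠ 0 →
      ∃ r : Fin l → ZMod p, (∀ i, r i ∈ R) ∧ ∑ i, r i = x := by
  intro x hx
  by_contra hcon
  have := Fact.mk hp
  have hN : repCount R l x = 0 := by
    simpa [repCount, filter_eq_empty_iff] using hcon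
  have hupper := card_pow_le_of_repCount_eq_zero hR.zero_notMem_s10 hR.mul_mem ⟨1, hR.one_mem⟩
    (by omega) hx hN
  have hlower : (p : ℝ) ^ (l + 1) < #R ^ (2 * l) :=
    pow_lt_pow_of_rpow_div_lt p.cast_nonneg (by omega) (by push_cast; exact hcard)
  have hmono : ((p : ℝ) - #R) ^ (l + 1) ≤ p ^ (l + 1) :=
    pow_le_pow_left₀ (sub_nonneg.2 (mod_cast (card_le_univ R).trans_eq (ZMod.card p)))
      (sub_le_self _ (Nat.cast_nonneg _)) _
  linarith
end

section
/- Let G be a finite abelian group and A ⊆ G a finite set. Then Σ_{s ∈ G} E(A, A_s) = E₃(A), where the sum ranges over all s ∈ G (equivalently over s ∈ A − A, since A_s = ∅ otherwise). -/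
/-!
Counting the quadruples of `E(A, B)` by their common difference `t = a₂ - a₁ = b₁ - b₂` gives
`E(A, B) = ∑ₜ |A_t| |B_t|`. Since `(A_s)_t = (A_t)_s` (both consist of the `x` with
`x, x + s, x + t, x + s + t ∈ A`) and `∑ₛ |B_s| = |B|²` for every `B`, summing over `s` yields
`∑ₜ |A_t| |A_t|² = E₃(A)`.
-/

open Finset Pointwise

/-- The additive energy `E(A,B)`: the number of quadruples `(a₁, a₂, b₁, b₂)`
with `a₁ + b₁ = a₂ + b₂`. -/
def addE {G : Type*} [AddCommGroup G] [DecidableEq G] (A B : Finset G) : ℕ :=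
  (((A ×ˢ A) ×ˢ B ×ˢ B).filter fun q => q.1.1 + q.2.1 = q.1.2 + q.2.2).card

namespace Finset

section AddGroup

variable {G : Type*} [AddGroup G] [DecidableEq G] {A : Finset G} {s x : G}

def shiftInter (A : Finset G) (s : G) : Finset G := A ∩ A.image (· - s)

@[simp]
lemma mem_shiftInter : x ∈ A.shiftInter s ↔ x ∈ A ∧ x + s ∈ A := by
  simp [shiftInter, sub_eq_iff_eq_add, and_comm]

lemma card_shiftInter_eq_card_filter (A : Finset G) (s : G) :
    #(A.shiftInter s) = #{p ∈ A ×ˢ A | p.2 = p.1 + s} :=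
  card_nbij' (fun x => (x, x + s)) Prod.fst (by intro x; simp +contextual)
    (by rintro ⟨x, y⟩; aesop) (by simp [Set.LeftInvOn]) (by simp +contextual [Set.LeftInvOn])

lemma card_shiftInter_eq_card_filter' (A : Finset G) (s : G) :
    #(A.shiftInter s) = #{p ∈ A ×ˢ A | p.1 = p.2 + s} := by
  rw [card_shiftInter_eq_card_filter]
  exact card_equiv (Equiv.prodComm G G) (by simp [and_comm])

lemma sum_card_shiftInter [Fintype G] (A : Finset G) : ∑ s, #(A.shiftInter s) = #A ^ 2 := by
  rw [sq, ← card_product, card_eq_sum_card_fiberwise (f := fun p => -p.1 + p.2) (t := univ)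
    (fun _ _ => mem_univ _)]
  simp_rw [card_shiftInter_eq_card_filter, neg_add_eq_iff_eq_add]

end AddGroup

section AddCommGroup

variable {G : Type*} [AddCommGroup G] [DecidableEq G]

lemma shiftInter_comm (A : Finset G) (s t : G) :
    (A.shiftInter s).shiftInter t = (A.shiftInter t).shiftInter s := by
  ext x
  simp only [mem_shiftInter, add_right_comm x s t]
  tauto

lemma addE_eq_sum_card_shiftInter_mul [Fintype G] (A B : Finset G) :
    addE A B = ∑ t, #(A.shiftInter t) * #(B.shiftInter t) := by
  rw [addE, card_eq_sum_card_fiberwise (f := fun q => q.1.2 - q.1.1) (t := univ)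
    (fun _ _ => mem_univ _)]
  refine sum_congr rfl fun t _ => ?_
  rw [card_shiftInter_eq_card_filter, card_shiftInter_eq_card_filter', ← card_product,
    filter_filter]
  congr 1
  ext ⟨⟨a₁, a₂⟩, b₁, b₂⟩
  simp only [mem_filter, mem_product, sub_eq_iff_eq_add']
  constructor
  · rintro ⟨h, hsum, rfl⟩
    exact ⟨⟨h.1, rfl⟩, h.2, add_left_cancel (hsum.trans (by abel) : a₁ + b₁ = a₁ + (b₂ + t))⟩
  · rintro ⟨⟨h, rfl⟩, hb, rfl⟩
    exact ⟨⟨h, hb⟩, by abel, rfl⟩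

end AddCommGroup

end Finset

theorem energy_E3_identity {G : Type*} [AddCommGroup G] [Fintype G] [DecidableEq G]
    (A : Finset G) :
    ∑ s : G, addE A (A ∩ A.image (fun a => a - s)) =
      ∑ s : G, (A ∩ A.image (fun a => a - s)).card ^ 3 := by
  change ∑ s, addE A (A.shiftInter s) = ∑ s, #(A.shiftInter s) ^ 3
  calc ∑ s, addE A (A.shiftInter s)
      = ∑ t, #(A.shiftInter t) * ∑ s, #((A.shiftInter t).shiftInter s) := by
        simp only [addE_eq_sum_card_shiftInter_mul, mul_sum]
        rw [sum_comm]
        exact sum_congr rfl fun t _ => sum_congr rfl fun s _ => by rw [shiftInter_comm]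
    _ = ∑ t, #(A.shiftInter t) ^ 3 := by
        simp only [sum_card_shiftInter, ← pow_succ']
end

section
/- Let G be an abelian group and A ⊆ G a finite set. Let S = A − A and S' = A + A. Then for every s ∈ S one has |S ∩ (S − s)| ≥ |A − A_s| and |S' ∩ (S' − s)| ≥ |A + A_s|. -/
/-!
Since `A_s` lies in both `A` and `A - s`, the sumset `A + A_s` lies in `(A + A) ∩ (A + A - s)` and
`A_s - A` lies in `(A - A) ∩ (A - A - s)`; and `A - A_s = -(A_s - A)` has the size of `A_s - A`.
-/

open Finset Pointwise

namespace Finset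

variable {G : Type*} [AddCommGroup G] [DecidableEq G]

lemma add_inter_sub_singleton_subset (A B : Finset G) (s : G) :
    A + (B ∩ (B - {s})) ⊆ (A + B) ∩ (A + B - {s}) := by
  rw [add_sub_assoc]
  exact add_inter_subset

lemma inter_sub_singleton_sub_subset (A B : Finset G) (s : G) :
    A ∩ (A - {s}) - B ⊆ (A - B) ∩ (A - B - {s}) := by
  rw [sub_right_comm]
  exact inter_sub_subset

lemma card_sub_comm (A B : Finset G) : (A - B).card = (B - A).card := by
  rw [← card_neg, neg_sub]

end Finset

theorem sumset_intersection_containment {G : Type*} [AddCommGroup G] [DecidableEq G]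
    (A : Finset G) :
    ∀ s ∈ A - A,
      (A - (A ∩ A.image (fun a => a - s))).card ≤
          ((A - A) ∩ (A - A).image (fun x => x - s)).card ∧
      (A + (A ∩ A.image (fun a => a - s))).card ≤
          ((A + A) ∩ (A + A).image (fun x => x - s)).card := by
  intro s _
  simp only [← sub_singleton]
  refine ⟨?_, card_le_card (add_inter_sub_singleton_subset A A s)⟩
  rw [card_sub_comm]
  exact card_le_card (inter_sub_singleton_sub_subset A A s)
end
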